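/- arXiv:1605.02666 — 6 statements merged into one kernel-verified Lean document; each statement's English description precedes it below -/
import Mathlib

section
/- Let ε be a nonzero real number and (u, v) ∈ ℝ². Then the matrix (1/ε)·(Cay_ε(hat(u, v, 0)) − 1) is skew-symmetric if and only if (u, v) = (0, 0). (Consequently, the discretisation of the Suslov problem with discrete displacement subvariety S = Cay_ε(d) and Moser–Veselov discrete Lagrangian is not consistent with respect to the inverse Cayley difference map.) -/
open Matrix

noncomputable section

/-- The hat map `(u, v, w) ↦ hat(u, v, w)` from `ℝ³` to `3×3` skew-symmetric matrices. -/
def hat3 (u v w : ℝ) : Matrix (Fin 3) (Fin 3) ℝ :=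
  !![0, -w, v; w, 0, -u; -v, u, 0]

/-- The Cayley map with time step `ε`. -/
def Cay (ε : ℝ) (A : Matrix (Fin 3) (Fin 3) ℝ) : Matrix (Fin 3) (Fin 3) ℝ :=
  (1 + (ε / 2) • A) * (1 - (ε / 2) • A)⁻¹

lemma cay_hat3_explicit (ε u v : ℝ) :
    Cay ε (hat3 u v 0) =
      (1 + (ε * u / 2) ^ 2 + (ε * v / 2) ^ 2)⁻¹ •
        !![1 + (ε * u / 2) ^ 2 - (ε * v / 2) ^ 2, 2 * (ε * u / 2) * (ε * v / 2),
              2 * (ε * v / 2);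
           2 * (ε * u / 2) * (ε * v / 2), 1 + (ε * v / 2) ^ 2 - (ε * u / 2) ^ 2,
              -(2 * (ε * u / 2));
           -(2 * (ε * v / 2)), 2 * (ε * u / 2), 1 - (ε * u / 2) ^ 2 - (ε * v / 2) ^ 2] := by
  set a := ε * u / 2 with ha
  set b := ε * v / 2 with hb
  have hd : (1 + a ^ 2 + b ^ 2) ≠ 0 := by positivity
  have hM : (1 : Matrix (Fin 3) (Fin 3) ℝ) - (ε / 2) • hat3 u v 0 =
      !![1, 0, -b; 0, 1, a; b, -a, 1] := by
    ext i j
    fin_cases i <;> fin_cases j <;>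
      simp [hat3, Matrix.one_apply, ha, hb] <;> ring
  have hinv : ((1 : Matrix (Fin 3) (Fin 3) ℝ) - (ε / 2) • hat3 u v 0)⁻¹ =
      (1 + a ^ 2 + b ^ 2)⁻¹ •
        !![1 + a ^ 2, a * b, b; a * b, 1 + b ^ 2, -a; -b, a, 1] := by
    apply inv_eq_right_inv
    rw [hM]
    ext i j
    fin_cases i <;> fin_cases j <;>
        simp [Matrix.mul_apply, Fin.sum_univ_three, Matrix.one_apply] <;>
      (field_simp; try ring)
  have hP : (1 : Matrix (Fin 3) (Fin 3) ℝ) + (ε / 2) • hat3 u v 0 =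
      !![1, 0, b; 0, 1, -a; -b, a, 1] := by
    ext i j
    fin_cases i <;> fin_cases j <;>
      simp [hat3, Matrix.one_apply, ha, hb] <;> ring
  rw [Cay, hinv, hP, Matrix.mul_smul]
  congr 1
  ext i j
  fin_cases i <;> fin_cases j <;>
      simp [Matrix.mul_apply, Fin.sum_univ_three] <;> ring

/-- For `ε ≠ 0` and `(u, v) ∈ ℝ²`, the matrix
`(1/ε)·(Cay_ε(hat(u, v, 0)) − 1)` is skew-symmetric iff `(u, v) = (0, 0)`. -/
theorem suslov_cayley_diff_skew_iff_zero
    (ε : ℝ) (hε : ε ≠ 0) (u v : ℝ) :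
    ((1 / ε) • (Cay ε (hat3 u v 0) - 1))ᵀ = -((1 / ε) • (Cay ε (hat3 u v 0) - 1)) ↔
      (u, v) = (0, 0) := by
  constructor
  · intro h
    rw [cay_hat3_explicit] at h
    set a := ε * u / 2 with ha
    set b := ε * v / 2 with hb
    have hd : (1 + a ^ 2 + b ^ 2) ≠ 0 := by positivity
    have h00 := congrFun (congrFun h 0) 0
    have h11 := congrFun (congrFun h 1) 1
    simp [Matrix.transpose_apply, Matrix.one_apply] at h00 h11
    have hb0 : b = 0 := by
      have hx : ε⁻¹ * ((1 + a ^ 2 + b ^ 2)⁻¹ * (1 + a ^ 2 - b ^ 2) - 1) = 0 := by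
        linarith [h00]
      have hy : (1 + a ^ 2 + b ^ 2)⁻¹ * (1 + a ^ 2 - b ^ 2) - 1 = 0 := by
        rcases mul_eq_zero.mp hx with h2 | h2
        · exact absurd h2 (inv_ne_zero hε)
        · exact h2
      have hz : (1 + a ^ 2 - b ^ 2) = (1 + a ^ 2 + b ^ 2) := by
        field_simp [hd] at hy
        linarith [hy]
      exact sq_eq_zero_iff.mp (by linarith [hz])
    have ha0 : a = 0 := by
      have hx : ε⁻¹ * ((1 + a ^ 2 + b ^ 2)⁻¹ * (1 + b ^ 2 - a ^ 2) - 1) = 0 := by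
        linarith [h11]
      have hy : (1 + a ^ 2 + b ^ 2)⁻¹ * (1 + b ^ 2 - a ^ 2) - 1 = 0 := by
        rcases mul_eq_zero.mp hx with h2 | h2
        · exact absurd h2 (inv_ne_zero hε)
        · exact h2
      have hz : (1 + b ^ 2 - a ^ 2) = (1 + a ^ 2 + b ^ 2) := by
        field_simp [hd] at hy
        linarith [hy]
      exact sq_eq_zero_iff.mp (by linarith [hz])
    have hu : u = 0 := by
      have h1 : ε * u = 0 := by
        have := ha ▸ ha0
        linarith [this]
      exact (mul_eq_zero.mp h1).resolve_left hε
    have hv : v = 0 := by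
      have h1 : ε * v = 0 := by
        have := hb ▸ hb0
        linarith [this]
      exact (mul_eq_zero.mp h1).resolve_left hε
    simp [hu, hv]
  · intro h
    have hu : u = 0 := (Prod.mk.injEq u v 0 0 ▸ h).1
    have hv : v = 0 := (Prod.mk.injEq u v 0 0 ▸ h).2
    subst hu hv
    have h0 : hat3 0 0 0 = 0 := by
      ext i j
      fin_cases i <;> fin_cases j <;>
        simp [hat3, Matrix.zero_apply, Matrix.vecHead, Matrix.vecTail]
    rw [h0]
    simp [Cay, Matrix.vecHead, Matrix.vecTail]

end
end

section
/- Let J be a real symmetric 3×3 matrix, ε a nonzero real number, W a real 3×3 matrix, and ξ a real 3×3 skew-symmetric matrix. Then the function s ↦ −(1/ε)·trace(J·exp(s·ξ)·W) is differentiable at s = 0 and its derivative there equals (1/2)·trace( ((1/ε)·(W·J − J·Wᵀ))·ξᵀ ). (Hence the discrete Legendre transformation of the Moser–Veselov discrete Lagrangian ℓ_d^{(1,ε)}(W) = −(1/ε)·trace(J·W), defined by right trivialisation of its derivative, is W ↦ (1/ε)·(W·J − J·Wᵀ).) -/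
/-! The derivative at `s = 0` is `-(1/ε)·tr(J ξ W)`, since `exp(s ξ)` has derivative `ξ` there.
Cyclicity and transpose invariance of the trace, together with `Jᵀ = J` and `ξᵀ = -ξ`, give
`tr((W J - J Wᵀ) ξᵀ) = -2 tr(J ξ W)`, which is the claimed pairing. -/

open Matrix

theorem hasDerivAt_exp_smul_const_zero {𝔸 : Type*} [NormedRing 𝔸] [NormedAlgebra ℝ 𝔸]
    [CompleteSpace 𝔸] (x : 𝔸) :
    HasDerivAt (fun s : ℝ => NormedSpace.exp (s • x)) x 0 := by
  simpa using hasDerivAt_exp_smul_const (𝕂 := ℝ) x 0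

section ExpDerivative

-- Any norm inducing the product topology works here; the statement does not mention the norm.
attribute [local instance] Matrix.linftyOpNormedRing Matrix.linftyOpNormedAlgebra

theorem Matrix.hasDerivAt_trace_mul_exp_smul_mul {n : Type*} [Fintype n] [DecidableEq n]
    (A B ξ : Matrix n n ℝ) :
    HasDerivAt (fun s : ℝ => (A * NormedSpace.exp (s • ξ) * B).trace) (A * ξ * B).trace 0 :=
  (traceLinearMap n ℝ ℝ).toContinuousLinearMap.hasFDerivAt.comp_hasDerivAt 0
    (((hasDerivAt_exp_smul_const_zero ξ).const_mul A).mul_const B)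

end ExpDerivative

theorem Matrix.trace_sub_mul_transpose_of_skew {n R : Type*} [Fintype n] [CommRing R]
    {J ξ : Matrix n n R} (hJ : Jᵀ = J) (hξ : ξᵀ = -ξ) (W : Matrix n n R) :
    ((W * J - J * Wᵀ) * ξᵀ).trace = -2 * (J * ξ * W).trace := by
  have hWJ : (W * J * ξᵀ).trace = -(J * ξ * W).trace := by
    rw [hξ, mul_neg, trace_neg, trace_mul_cycle W J ξ, trace_mul_cycle ξ W J]
  have hJW : (J * Wᵀ * ξᵀ).trace = (J * ξ * W).trace := by
    rw [← trace_transpose]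
    simp only [transpose_mul, transpose_transpose, hJ]
    rw [← Matrix.mul_assoc, trace_mul_cycle]
  rw [sub_mul, trace_sub, hWJ, hJW]
  ring

theorem suslov_discrete_legendre_moser_veselov_general
    (J : Matrix (Fin 3) (Fin 3) ℝ) (hJ : Jᵀ = J)
    (ε : ℝ)
    (W ξ : Matrix (Fin 3) (Fin 3) ℝ) (hξ : ξᵀ = -ξ) :
    HasDerivAt (fun s : ℝ => -(1 / ε) * (J * NormedSpace.exp (s • ξ) * W).trace)
      ((1 / 2 : ℝ) * (((1 / ε) • (W * J - J * Wᵀ)) * ξᵀ).trace) 0 := by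
  refine ((hasDerivAt_trace_mul_exp_smul_mul J W ξ).const_mul (-(1 / ε))).congr_deriv ?_
  rw [smul_mul, trace_smul, trace_sub_mul_transpose_of_skew hJ hξ, smul_eq_mul]
  ring

/-- Let `J` be a real symmetric `3×3` matrix, `ε ≠ 0`, `W` a real `3×3`
matrix and `ξ` skew-symmetric. Then `s ↦ −(1/ε)·trace(J·exp(s·ξ)·W)` is differentiable at
`s = 0` with derivative `(1/2)·trace(((1/ε)·(W·J − J·Wᵀ))·ξᵀ)`; hence the discrete Legendre
transformation of the Moser–Veselov discrete Lagrangian is `W ↦ (1/ε)·(W·J − J·Wᵀ)`. -/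
theorem suslov_discrete_legendre_moser_veselov
    (J : Matrix (Fin 3) (Fin 3) ℝ) (hJ : Jᵀ = J)
    (ε : ℝ) (hε : ε ≠ 0)
    (W ξ : Matrix (Fin 3) (Fin 3) ℝ) (hξ : ξᵀ = -ξ) :
    HasDerivAt (fun s : ℝ => -(1 / ε) * (J * NormedSpace.exp (s • ξ) * W).trace)
      ((1 / 2 : ℝ) * (((1 / ε) • (W * J - J * Wᵀ)) * ξᵀ).trace) 0 :=
  suslov_discrete_legendre_moser_veselov_general J hJ ε W ξ hξ
end

section
/- Let ε be a nonzero real number and (u, v) ∈ ℝ². Set W := Cay_ε(hat(u, v, 0)) and J := (1/2)·trace(𝕀)·1 − 𝕀. Then (1/ε)·(W·J − J·Wᵀ) = hat(M1, M2, M3), where, with D = 4 + ε²(u² + v²): M1 = 2·(2·I11·u + ε·v·(I13·u + I23·v))/D, M2 = 2·(2·I22·v − ε·u·(I13·u + I23·v))/D, M3 = 2·(2·(I13·u + I23·v) + ε·(I22 − I11)·u·v)/D. -/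
/-! With `A = hat ω`, `ω = (u, v, 0)`, one has `A³ = -|ω|² A`, so the Cayley transform is a
quadratic polynomial in `A`: `W = 1 + (4/D) (ε A + (ε²/2) A²)`, and `Wᵀ` is the same with `A`
replaced by `-A`. Hence `(1/ε)(W J - J Wᵀ) = (4/D) (P + (ε/2) [A, P])` with `P = A J + J A`.
For `J = ½ tr 𝕀 - 𝕀` and symmetric `𝕀` one has `P = hat (𝕀 ω)`, and the commutator of two hats
is the hat of the cross product, so `M = (2/D) (2 𝕀 ω + ε ω × 𝕀 ω)`. -/

open Matrix

noncomputable section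

/-- The inertia tensor of the Suslov rigid body. -/
def inertia (I11 I22 I33 I13 I23 : ℝ) : Matrix (Fin 3) (Fin 3) ℝ :=
  !![I11, 0, I13; 0, I22, I23; I13, I23, I33]

/-- The matrix `J := (1/2)·trace(𝕀)·1 − 𝕀`. -/
def Jmat (I : Matrix (Fin 3) (Fin 3) ℝ) : Matrix (Fin 3) (Fin 3) ℝ :=
  (((1 : ℝ) / 2) * I.trace) • (1 : Matrix (Fin 3) (Fin 3) ℝ) - I

section CubicCayley

variable {𝕜 : Type*} [Field 𝕜]

theorem one_sub_smul_mul_eq_one_of_pow_three {R : Type*} [Ring R] [Algebra 𝕜 R] {a : R}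
    {s t : 𝕜} (ha : a ^ 3 = -s • a) (h : 1 + t ^ 2 * s ≠ 0) :
    (1 - t • a) * (1 + (t / (1 + t ^ 2 * s)) • a + (t ^ 2 / (1 + t ^ 2 * s)) • a ^ 2) = 1 := by
  have ha' : a * (a * a) = -s • a := by rw [← ha]; noncomm_ring
  simp only [sub_mul, mul_add, one_mul, mul_one, pow_two, mul_smul_comm, smul_mul_assoc, ha']
  match_scalars <;> field_simp <;> ring

variable {n : Type*} [Fintype n] [DecidableEq n]

theorem one_add_smul_mul_inv_one_sub_smul_of_pow_three {A : Matrix n n 𝕜} {s t : 𝕜}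
    (hA : A ^ 3 = -s • A) (h : 1 + t ^ 2 * s ≠ 0) :
    (1 + t • A) * (1 - t • A)⁻¹ =
      1 + (2 * t / (1 + t ^ 2 * s)) • A + (2 * t ^ 2 / (1 + t ^ 2 * s)) • A ^ 2 := by
  have hA' : A * (A * A) = -s • A := by rw [← hA]; noncomm_ring
  rw [Matrix.inv_eq_right_inv (one_sub_smul_mul_eq_one_of_pow_three hA h)]
  simp only [add_mul, mul_add, one_mul, mul_one, pow_two, mul_smul_comm, smul_mul_assoc, hA']
  match_scalars <;> field_simp <;> ring

theorem transpose_one_add_smul_add_smul_sq {A : Matrix n n 𝕜} (hA : Aᵀ = -A) (x y : 𝕜) :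
    (1 + x • A + y • A ^ 2)ᵀ = 1 - x • A + y • A ^ 2 := by
  simp only [transpose_add, transpose_smul, transpose_one, transpose_pow, hA, even_two.neg_pow,
    smul_neg, sub_eq_add_neg]

end CubicCayley

theorem one_add_smul_add_smul_sq_mul_sub_mul {𝕜 R : Type*} [CommRing 𝕜] [Ring R] [Algebra 𝕜 R]
    (a j : R) (x y : 𝕜) :
    (1 + x • a + y • a ^ 2) * j - j * (1 - x • a + y • a ^ 2) =
      x • (a * j + j * a) + y • (a * (a * j + j * a) - (a * j + j * a) * a) := by
  simp only [add_mul, mul_add, mul_sub, one_mul, mul_one, pow_two, mul_smul_comm,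
    smul_mul_assoc, mul_assoc]
  module

theorem hat3_pow_three (u v w : ℝ) : hat3 u v w ^ 3 = -(u ^ 2 + v ^ 2 + w ^ 2) • hat3 u v w := by
  ext i j
  fin_cases i <;> fin_cases j <;> simp [hat3, pow_succ, mul_apply, Fin.sum_univ_three] <;> ring

theorem hat3_transpose (u v w : ℝ) : (hat3 u v w)ᵀ = -hat3 u v w := by
  ext i j
  fin_cases i <;> fin_cases j <;> simp [hat3]

theorem hat3_mul_sub_mul (a₁ a₂ a₃ b₁ b₂ b₃ : ℝ) :
    hat3 a₁ a₂ a₃ * hat3 b₁ b₂ b₃ - hat3 b₁ b₂ b₃ * hat3 a₁ a₂ a₃ =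
      hat3 (a₂ * b₃ - a₃ * b₂) (a₃ * b₁ - a₁ * b₃) (a₁ * b₂ - a₂ * b₁) := by
  ext i j
  fin_cases i <;> fin_cases j <;> simp [hat3] <;> ring

theorem hat3_mul_Jmat_add_Jmat_mul_hat3 {S : Matrix (Fin 3) (Fin 3) ℝ} (hS : S.IsSymm)
    (u v w : ℝ) :
    hat3 u v w * Jmat S + Jmat S * hat3 u v w =
      hat3 ((S *ᵥ ![u, v, w]) 0) ((S *ᵥ ![u, v, w]) 1) ((S *ᵥ ![u, v, w]) 2) := by
  have h10 : S 1 0 = S 0 1 := hS.apply 0 1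
  have h20 : S 2 0 = S 0 2 := hS.apply 0 2
  have h21 : S 2 1 = S 1 2 := hS.apply 1 2
  ext i j
  fin_cases i <;> fin_cases j <;>
    simp [hat3, Jmat, mul_apply, Fin.sum_univ_three, trace_fin_three, mulVec, vecMul,
      dotProduct, one_apply, h10, h20, h21] <;> ring

theorem inertia_isSymm (I11 I22 I33 I13 I23 : ℝ) : (inertia I11 I22 I33 I13 I23).IsSymm := by
  ext i j
  fin_cases i <;> fin_cases j <;> rfl

theorem suslov_momentum_locus_moser_veselov_general
    (I11 I22 I33 I13 I23 : ℝ)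
    (ε : ℝ) (hε : ε ≠ 0) (u v : ℝ) :
    (1 / ε) • (Cay ε (hat3 u v 0) * Jmat (inertia I11 I22 I33 I13 I23)
        - Jmat (inertia I11 I22 I33 I13 I23) * (Cay ε (hat3 u v 0))ᵀ) =
      hat3
        (2 * (2 * I11 * u + ε * v * (I13 * u + I23 * v)) / (4 + ε ^ 2 * (u ^ 2 + v ^ 2)))
        (2 * (2 * I22 * v - ε * u * (I13 * u + I23 * v)) / (4 + ε ^ 2 * (u ^ 2 + v ^ 2)))
        (2 * (2 * (I13 * u + I23 * v) + ε * (I22 - I11) * u * v) /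
          (4 + ε ^ 2 * (u ^ 2 + v ^ 2))) := by
  have hD : 1 + (ε / 2) ^ 2 * (u ^ 2 + v ^ 2 + 0 ^ 2) ≠ 0 := by positivity
  rw [Cay, one_add_smul_mul_inv_one_sub_smul_of_pow_three (hat3_pow_three u v 0) hD,
    transpose_one_add_smul_add_smul_sq (hat3_transpose u v 0),
    one_add_smul_add_smul_sq_mul_sub_mul,
    hat3_mul_Jmat_add_Jmat_mul_hat3 (inertia_isSymm I11 I22 I33 I13 I23), hat3_mul_sub_mul]
  ext i j
  fin_cases i <;> fin_cases j <;>
    simp [hat3, inertia, mulVec, dotProduct, Fin.sum_univ_three] <;> field_simp <;> ring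

/-- Explicit parametrisation of the discrete momentum of the
Moser–Veselov type discretisation of the Suslov problem:
`(1/ε)·(W·J − J·Wᵀ) = hat(M1, M2, M3)` with `W = Cay_ε(hat(u, v, 0))`. -/
theorem suslov_momentum_locus_moser_veselov
    (I11 I22 I33 I13 I23 : ℝ) (hI11 : 0 < I11) (hI22 : 0 < I22)
    (ε : ℝ) (hε : ε ≠ 0) (u v : ℝ) :
    (1 / ε) • (Cay ε (hat3 u v 0) * Jmat (inertia I11 I22 I33 I13 I23)
        - Jmat (inertia I11 I22 I33 I13 I23) * (Cay ε (hat3 u v 0))ᵀ) =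
      hat3
        (2 * (2 * I11 * u + ε * v * (I13 * u + I23 * v)) / (4 + ε ^ 2 * (u ^ 2 + v ^ 2)))
        (2 * (2 * I22 * v - ε * u * (I13 * u + I23 * v)) / (4 + ε ^ 2 * (u ^ 2 + v ^ 2)))
        (2 * (2 * (I13 * u + I23 * v) + ε * (I22 - I11) * u * v) /
          (4 + ε ^ 2 * (u ^ 2 + v ^ 2))) :=
  suslov_momentum_locus_moser_veselov_general I11 I22 I33 I13 I23 ε hε u v

end
end

section
/- Fix ε ∈ ℝ and suppose (u, v), (u′, v′) ∈ ℝ² satisfy the two equations (4·I11·u′ + 2·ε·v′·(I13·u′ + I23·v′))/(4 + ε²(u′² + v′²)) = (4·I11·u − 2·ε·v·(I13·u + I23·v))/(4 + ε²(u² + v²)) and (4·I22·v′ − 2·ε·u′·(I13·u′ + I23·v′))/(4 + ε²(u′² + v′²)) = (4·I22·v + 2·ε·u·(I13·u + I23·v))/(4 + ε²(u² + v²)). Then R(u′, v′) = R(u, v), where R(u, v) := 4·(I11·u² + I22·v²)·(4·I11·I22 + ε²·(I13·u + I23·v)²)/(4 + ε²(u² + v²))². -/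
/-!
Both sides of each discrete equation are components of a momentum `M_ε(u, v)`; the left-hand
sides are `M_{-ε}(u', v')`, since the denominator only sees `ε²`. The invariant is the quadratic
form `I22 M₁² + I11 M₂²` of that momentum (the cross terms in `ε` cancel), and it is even in `ε`,
so `R(u', v') = R_{-ε}(u', v') = R(u, v)`.
-/

namespace Suslov

variable {K : Type*} [Field K] (I11 I22 I13 I23 : K)

def momentum (ε u v : K) : K × K :=
  ((4 * I11 * u - 2 * ε * v * (I13 * u + I23 * v)) / (4 + ε ^ 2 * (u ^ 2 + v ^ 2)),
    (4 * I22 * v + 2 * ε * u * (I13 * u + I23 * v)) / (4 + ε ^ 2 * (u ^ 2 + v ^ 2)))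

def invariant (ε u v : K) : K :=
  4 * (I11 * u ^ 2 + I22 * v ^ 2) * (4 * I11 * I22 + ε ^ 2 * (I13 * u + I23 * v) ^ 2) /
    (4 + ε ^ 2 * (u ^ 2 + v ^ 2)) ^ 2

theorem invariant_eq_momentum (ε u v : K) :
    invariant I11 I22 I13 I23 ε u v =
      I22 * (momentum I11 I22 I13 I23 ε u v).1 ^ 2 +
        I11 * (momentum I11 I22 I13 I23 ε u v).2 ^ 2 := by
  rw [invariant, momentum, div_pow, div_pow, mul_div_assoc', mul_div_assoc', ← add_div]
  congr 1
  ring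

theorem invariant_neg (ε u v : K) :
    invariant I11 I22 I13 I23 (-ε) u v = invariant I11 I22 I13 I23 ε u v := by
  simp only [invariant, neg_sq]

theorem invariant_eq_of_momentum_neg_eq {ε u v u' v' : K}
    (h : momentum I11 I22 I13 I23 (-ε) u' v' = momentum I11 I22 I13 I23 ε u v) :
    invariant I11 I22 I13 I23 ε u' v' = invariant I11 I22 I13 I23 ε u v := by
  rw [← invariant_neg, invariant_eq_momentum, invariant_eq_momentum, h]

end Suslov

theorem suslov_discrete_invariant_moser_veselov_general
    (I11 I22 I13 I23 : ℝ)
    (ε u v u' v' : ℝ)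
    (h1 : (4 * I11 * u' + 2 * ε * v' * (I13 * u' + I23 * v')) /
        (4 + ε ^ 2 * (u' ^ 2 + v' ^ 2)) =
      (4 * I11 * u - 2 * ε * v * (I13 * u + I23 * v)) / (4 + ε ^ 2 * (u ^ 2 + v ^ 2)))
    (h2 : (4 * I22 * v' - 2 * ε * u' * (I13 * u' + I23 * v')) /
        (4 + ε ^ 2 * (u' ^ 2 + v' ^ 2)) =
      (4 * I22 * v + 2 * ε * u * (I13 * u + I23 * v)) / (4 + ε ^ 2 * (u ^ 2 + v ^ 2))) :
    4 * (I11 * u' ^ 2 + I22 * v' ^ 2) * (4 * I11 * I22 + ε ^ 2 * (I13 * u' + I23 * v') ^ 2) /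
        (4 + ε ^ 2 * (u' ^ 2 + v' ^ 2)) ^ 2 =
      4 * (I11 * u ^ 2 + I22 * v ^ 2) * (4 * I11 * I22 + ε ^ 2 * (I13 * u + I23 * v) ^ 2) /
        (4 + ε ^ 2 * (u ^ 2 + v ^ 2)) ^ 2 := by
  have hm :
      Suslov.momentum I11 I22 I13 I23 (-ε) u' v' = Suslov.momentum I11 I22 I13 I23 ε u v := by
    simp only [Suslov.momentum, neg_sq, neg_mul, sub_neg_eq_add, mul_neg, ← sub_eq_add_neg]
    rw [h1, h2]
  exact Suslov.invariant_eq_of_momentum_neg_eq I11 I22 I13 I23 hm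

/-- The rational function `R` is an invariant of the discrete
Euler–Poincaré–Suslov equations of the Moser–Veselov type (Fedorov–Zenkov)
discretisation of the Suslov problem. -/
theorem suslov_discrete_invariant_moser_veselov
    (I11 I22 I13 I23 : ℝ) (hI11 : 0 < I11) (hI22 : 0 < I22)
    (ε u v u' v' : ℝ)
    (h1 : (4 * I11 * u' + 2 * ε * v' * (I13 * u' + I23 * v')) /
        (4 + ε ^ 2 * (u' ^ 2 + v' ^ 2)) =
      (4 * I11 * u - 2 * ε * v * (I13 * u + I23 * v)) / (4 + ε ^ 2 * (u ^ 2 + v ^ 2)))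
    (h2 : (4 * I22 * v' - 2 * ε * u' * (I13 * u' + I23 * v')) /
        (4 + ε ^ 2 * (u' ^ 2 + v' ^ 2)) =
      (4 * I22 * v + 2 * ε * u * (I13 * u + I23 * v)) / (4 + ε ^ 2 * (u ^ 2 + v ^ 2))) :
    4 * (I11 * u' ^ 2 + I22 * v' ^ 2) * (4 * I11 * I22 + ε ^ 2 * (I13 * u' + I23 * v') ^ 2) /
        (4 + ε ^ 2 * (u' ^ 2 + v' ^ 2)) ^ 2 =
      4 * (I11 * u ^ 2 + I22 * v ^ 2) * (4 * I11 * I22 + ε ^ 2 * (I13 * u + I23 * v) ^ 2) /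
        (4 + ε ^ 2 * (u ^ 2 + v ^ 2)) ^ 2 :=
  suslov_discrete_invariant_moser_veselov_general I11 I22 I13 I23 ε u v u' v' h1 h2
end

section
/- Let ε be a nonzero real number and (u, v) ∈ ℝ². Set W := Cay_ε(hat(u, v, 0)) and J := (1/2)·trace(𝕀)·1 − 𝕀. Then 2·1 + W + Wᵀ is invertible, and for every real 3×3 skew-symmetric matrix ξ the function s ↦ (2/ε)·trace( J·(2·1 − V(s) − V(s)ᵀ)·(2·1 + V(s) + V(s)ᵀ)⁻¹ ), with V(s) = exp(s·ξ)·W, is differentiable at s = 0 with derivative (1/2)·trace( hat(N1, N2, N3)·ξᵀ ), where N1 = I11·u + (ε/2)·v·(I13·u + I23·v) + (ε²/4)·u·(I11·u² + I22·v²), N2 = I22·v − (ε/2)·u·(I13·u + I23·v) + (ε²/4)·v·(I11·u² + I22·v²), N3 = I13·u + I23·v + (ε/2)·u·v·(I22 − I11). -/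
open Matrix

noncomputable section

/-!
Write `W = Cay_ε(hat(u, v, 0)) = (1 + X)(1 - X)⁻¹` with `X = (ε/2)·hat(u, v, 0)` skew, and
`S = 1 - X²`. From `W S = (1 + X)²` and `Wᵀ S = (1 - X)²` one gets `(2 + W + Wᵀ) S = 4`, so the
inverse in the discrete Lagrangian is the polynomial `S/4` in `X`. Since
`2 - V - Vᵀ = 4 - (2 + V + Vᵀ)`, differentiating along `V(s) = exp(sξ) W` only differentiates that
inverse, and cyclicity of the trace turns the derivative into `-(1/(2ε))·tr(A ξ)` with
`A = (1 + X)² (J + Jᵀ) S`. For skew `ξ` only the skew part of `A` contributes, and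
`A - Aᵀ = 2ε·hat(N)` is a polynomial identity in the entries.
-/

namespace Matrix

variable {n : Type*} [Fintype n]

section Derivatives

open scoped Matrix.Norms.Operator

theorem _root_.HasDerivAt.matrix_transpose {m : Type*} [Fintype m] {f : ℝ → Matrix m n ℝ}
    {f' : Matrix m n ℝ} {t : ℝ} (hf : HasDerivAt f f' t) :
    HasDerivAt (fun s => (f s)ᵀ) f'ᵀ t :=
  (transposeLinearEquiv m n ℝ ℝ).toLinearMap.toContinuousLinearMap.hasFDerivAt.comp_hasDerivAt t hf

theorem _root_.HasDerivAt.matrix_trace {f : ℝ → Matrix n n ℝ} {f' : Matrix n n ℝ} {t : ℝ}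
    (hf : HasDerivAt f f' t) : HasDerivAt (fun s => (f s).trace) f'.trace t :=
  (traceLinearMap n ℝ ℝ).toContinuousLinearMap.hasFDerivAt.comp_hasDerivAt t hf

variable [DecidableEq n]

theorem hasDerivAt_exp_smul_mul (ξ W : Matrix n n ℝ) :
    HasDerivAt (fun s : ℝ => NormedSpace.exp (s • ξ) * W) (ξ * W) 0 := by
  have h := (hasDerivAt_exp_smul_const (𝕂 := ℝ) ξ 0).mul_const W
  simp only [zero_smul, NormedSpace.exp_zero, one_mul] at h
  exact h

theorem hasDerivAt_trace_mul_sub_mul_inv {M : ℝ → Matrix n n ℝ} {M' : Matrix n n ℝ} {t : ℝ}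
    (hM : HasDerivAt M M' t) (hunit : IsUnit (M t)) (K C : Matrix n n ℝ) :
    HasDerivAt (fun s => (K * (C - M s) * (M s)⁻¹).trace)
      (-(K * C * (M t)⁻¹ * M' * (M t)⁻¹).trace) t := by
  obtain ⟨u, hu⟩ := hunit
  have hinv : HasDerivAt (fun s => (M s)⁻¹) (-((M t)⁻¹ * M' * (M t)⁻¹)) t := by
    have h : HasFDerivAt Ring.inverse _ (M t) := hu ▸ hasFDerivAt_ringInverse (𝕜 := ℝ) u
    have h' := h.comp_hasDerivAt t hM
    simp only [Function.comp_def, ← nonsing_inv_eq_ringInverse, coe_units_inv, hu] at h'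
    exact h'
  have hMP : M t * (M t)⁻¹ = 1 := mul_nonsing_inv _ ((isUnit_iff_isUnit_det _).mp ⟨u, hu⟩)
  refine (((hM.const_sub C).const_mul K).mul hinv).matrix_trace.congr_deriv ?_
  rw [← trace_neg]
  congr 1
  rw [show K * (C - M t) * -((M t)⁻¹ * M' * (M t)⁻¹)
      = K * (M t * (M t)⁻¹) * M' * (M t)⁻¹ - K * C * (M t)⁻¹ * M' * (M t)⁻¹ by noncomm_ring, hMP]
  noncomm_ring

theorem hasDerivAt_trace_mul_sub_mul_inv_exp_smul_mul (K ξ W : Matrix n n ℝ)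
    (hunit : IsUnit (2 + W + Wᵀ)) :
    HasDerivAt
      (fun s : ℝ => (K * (2 - NormedSpace.exp (s • ξ) * W - (NormedSpace.exp (s • ξ) * W)ᵀ) *
        (2 + NormedSpace.exp (s • ξ) * W + (NormedSpace.exp (s • ξ) * W)ᵀ)⁻¹).trace)
      (-(K * 4 * (2 + W + Wᵀ)⁻¹ * (ξ * W + (ξ * W)ᵀ) * (2 + W + Wᵀ)⁻¹).trace) 0 := by
  have hV := hasDerivAt_exp_smul_mul ξ W
  have h := hasDerivAt_trace_mul_sub_mul_inv ((hV.const_add 2).add hV.matrix_transpose)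
    (by simpa using hunit) K 4
  simp only [Pi.add_apply, zero_smul, NormedSpace.exp_zero, Matrix.one_mul] at h
  convert h using 4 with s
  rw [show (4 : Matrix n n ℝ) = 2 + 2 by norm_num]
  abel_nf

end Derivatives

theorem trace_mul_eq_neg_half_trace_sub_transpose_mul {ξ : Matrix n n ℝ} (hξ : ξᵀ = -ξ)
    (A : Matrix n n ℝ) : (A * ξ).trace = -(1 / 2) * ((A - Aᵀ) * ξᵀ).trace := by
  have h : (Aᵀ * ξᵀ).trace = (A * ξ).trace := by
    rw [← transpose_mul, trace_transpose, trace_mul_comm]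
  rw [sub_mul, trace_sub, h, hξ, mul_neg, trace_neg]
  ring

variable [DecidableEq n]

/-- `Cay ε A = cayley ((ε / 2) • A)` by definition. -/
def cayley (X : Matrix n n ℝ) : Matrix n n ℝ := (1 + X) * (1 - X)⁻¹

variable {X : Matrix n n ℝ}

theorem isUnit_one_sub_of_transpose_eq_neg (hX : Xᵀ = -X) : IsUnit (1 - X) := by
  have hpos : (1 + Xᴴ * X).PosDef :=
    PosDef.one.add_posSemidef (posSemidef_conjTranspose_mul_self X)
  have hprod : (1 - X)ᵀ * (1 - X) = 1 + Xᴴ * X := by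
    rw [conjTranspose_eq_transpose_of_trivial, transpose_sub, transpose_one, hX]
    noncomm_ring
  have hdet := hpos.isUnit
  rw [← hprod, isUnit_iff_isUnit_det, det_mul] at hdet
  exact (isUnit_iff_isUnit_det _).mpr (isUnit_of_mul_isUnit_right hdet)

theorem isUnit_one_add_of_transpose_eq_neg (hX : Xᵀ = -X) : IsUnit (1 + X) := by
  simpa using isUnit_one_sub_of_transpose_eq_neg (X := -X) (by rw [transpose_neg, hX])

theorem transpose_cayley (hX : Xᵀ = -X) : (cayley X)ᵀ = (1 + X)⁻¹ * (1 - X) := by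
  rw [cayley, transpose_mul, transpose_nonsing_inv, transpose_sub, transpose_add, transpose_one,
    hX, sub_neg_eq_add, ← sub_eq_add_neg]

theorem cayley_mul_one_sub_mul_self (hX : Xᵀ = -X) :
    cayley X * (1 - X * X) = (1 + X) * (1 + X) := by
  rw [cayley, Matrix.mul_assoc, show 1 - X * X = (1 - X) * (1 + X) by noncomm_ring,
    ← Matrix.mul_assoc (1 - X)⁻¹, nonsing_inv_mul _ ((isUnit_iff_isUnit_det _).mp
      (isUnit_one_sub_of_transpose_eq_neg hX)), Matrix.one_mul]

theorem transpose_cayley_mul_one_sub_mul_self (hX : Xᵀ = -X) :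
    (cayley X)ᵀ * (1 - X * X) = (1 - X) * (1 - X) := by
  rw [transpose_cayley hX, Matrix.mul_assoc,
    show (1 - X) * (1 - X * X) = (1 + X) * ((1 - X) * (1 - X)) by noncomm_ring,
    ← Matrix.mul_assoc, nonsing_inv_mul _ ((isUnit_iff_isUnit_det _).mp
      (isUnit_one_add_of_transpose_eq_neg hX)), Matrix.one_mul]

theorem two_add_cayley_add_transpose_mul_quarter_smul (hX : Xᵀ = -X) :
    (2 + cayley X + (cayley X)ᵀ) * ((1 / 4 : ℝ) • (1 - X * X)) = 1 := by
  rw [mul_smul_comm, Matrix.add_mul, Matrix.add_mul, cayley_mul_one_sub_mul_self hX,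
    transpose_cayley_mul_one_sub_mul_self hX,
    show 2 * (1 - X * X) + (1 + X) * (1 + X) + (1 - X) * (1 - X) = (4 : ℝ) • (1 : Matrix n n ℝ)
      by noncomm_ring; rw [← Int.cast_smul_eq_zsmul ℝ]; norm_num, smul_smul]
  norm_num

theorem inv_two_add_cayley_add_transpose (hX : Xᵀ = -X) :
    (2 + cayley X + (cayley X)ᵀ)⁻¹ = (1 / 4 : ℝ) • (1 - X * X) :=
  inv_eq_right_inv (two_add_cayley_add_transpose_mul_quarter_smul hX)

theorem isUnit_two_add_cayley_add_transpose (hX : Xᵀ = -X) :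
    IsUnit (2 + cayley X + (cayley X)ᵀ) :=
  (isUnit_iff_isUnit_det _).mpr
    (isUnit_det_of_right_inverse (two_add_cayley_add_transpose_mul_quarter_smul hX))

theorem trace_mul_four_mul_inv_mul_mul_inv (hX : Xᵀ = -X) (J ξ : Matrix n n ℝ) :
    (J * 4 * (2 + cayley X + (cayley X)ᵀ)⁻¹ * (ξ * cayley X + (ξ * cayley X)ᵀ) *
        (2 + cayley X + (cayley X)ᵀ)⁻¹).trace =
      (1 / 4) * ((1 + X) * (1 + X) * (J + Jᵀ) * (1 - X * X) * ξ).trace := by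
  set S := 1 - X * X
  set W := cayley X
  have hS : Sᵀ = S := by rw [transpose_sub, transpose_one, transpose_mul, hX, neg_mul_neg]
  have hJS : J * 4 * ((1 / 4 : ℝ) • S) = J * S := by
    rw [show (4 : Matrix n n ℝ) = (4 : ℝ) • 1 by rw [smul_one_eq_diagonal, ← diagonal_ofNat],
      Matrix.mul_smul, Matrix.mul_smul, Matrix.mul_one, smul_mul_assoc, smul_smul]
    norm_num
  have hξW : (J * S * (ξ * W) * S).trace = (W * S * J * S * ξ).trace := calc
    _ = (J * S * ξ * (W * S)).trace := by simp only [Matrix.mul_assoc]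
    _ = (W * S * (J * S * ξ)).trace := trace_mul_comm _ _
    _ = _ := by simp only [Matrix.mul_assoc]
  have hξWT : (J * S * (ξ * W)ᵀ * S).trace = (W * S * Jᵀ * S * ξ).trace := calc
    _ = (S * ξ * (W * S * Jᵀ)).trace := by
      rw [← trace_transpose]
      simp only [transpose_mul, transpose_transpose, hS, Matrix.mul_assoc]
    _ = (W * S * Jᵀ * (S * ξ)).trace := trace_mul_comm _ _
    _ = _ := by simp only [Matrix.mul_assoc]
  rw [inv_two_add_cayley_add_transpose hX, hJS, Matrix.mul_smul, trace_smul, smul_eq_mul,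
    Matrix.mul_add, Matrix.add_mul, trace_add, hξW, hξWT, cayley_mul_one_sub_mul_self hX,
    ← trace_add]
  congr 2
  noncomm_ring

end Matrix

theorem cayley_hat3_skew_part (I11 I22 I33 I13 I23 ε u v : ℝ) :
    let X := (ε / 2) • hat3 u v 0
    let J := Jmat (inertia I11 I22 I33 I13 I23)
    let A := (1 + X) * (1 + X) * (J + Jᵀ) * (1 - X * X)
    A - Aᵀ = (2 * ε) • hat3
      (I11 * u + (ε / 2) * v * (I13 * u + I23 * v) + (ε ^ 2 / 4) * u * (I11 * u ^ 2 + I22 * v ^ 2))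
      (I22 * v - (ε / 2) * u * (I13 * u + I23 * v) + (ε ^ 2 / 4) * v * (I11 * u ^ 2 + I22 * v ^ 2))
      (I13 * u + I23 * v + (ε / 2) * u * v * (I22 - I11)) := by
  intro X J A
  simp only [X, J, A, hat3, Jmat, inertia, trace_fin_three]
  ext i j
  fin_cases i <;> fin_cases j <;>
    simp [Matrix.mul_apply, Fin.sum_univ_three, one_apply] <;> ring

theorem suslov_discrete_legendre_consistent_general
    (I11 I22 I33 I13 I23 : ℝ)
    (ε : ℝ) (hε : ε ≠ 0) (u v : ℝ) :
    IsUnit ((2 : Matrix (Fin 3) (Fin 3) ℝ)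
        + Cay ε (hat3 u v 0) + (Cay ε (hat3 u v 0))ᵀ) ∧
      ∀ ξ : Matrix (Fin 3) (Fin 3) ℝ, ξᵀ = -ξ →
        HasDerivAt
          (fun s : ℝ =>
            (2 / ε) *
              (Jmat (inertia I11 I22 I33 I13 I23) *
                ((2 : Matrix (Fin 3) (Fin 3) ℝ)
                    - NormedSpace.exp (s • ξ) * Cay ε (hat3 u v 0)
                    - (NormedSpace.exp (s • ξ) * Cay ε (hat3 u v 0))ᵀ) *
                ((2 : Matrix (Fin 3) (Fin 3) ℝ)
                    + NormedSpace.exp (s • ξ) * Cay ε (hat3 u v 0)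
                    + (NormedSpace.exp (s • ξ) * Cay ε (hat3 u v 0))ᵀ)⁻¹).trace)
          ((1 / 2 : ℝ) *
            (hat3
                (I11 * u + (ε / 2) * v * (I13 * u + I23 * v)
                  + (ε ^ 2 / 4) * u * (I11 * u ^ 2 + I22 * v ^ 2))
                (I22 * v - (ε / 2) * u * (I13 * u + I23 * v)
                  + (ε ^ 2 / 4) * v * (I11 * u ^ 2 + I22 * v ^ 2))
                (I13 * u + I23 * v + (ε / 2) * u * v * (I22 - I11)) * ξᵀ).trace)
          0 := by
  set X := (ε / 2) • hat3 u v 0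
  have hX : Xᵀ = -X := by rw [transpose_smul, hat3_transpose, smul_neg]
  rw [show Cay ε (hat3 u v 0) = cayley X from rfl]
  refine ⟨isUnit_two_add_cayley_add_transpose hX, fun ξ hξ => ?_⟩
  have h := (hasDerivAt_trace_mul_sub_mul_inv_exp_smul_mul (Jmat (inertia I11 I22 I33 I13 I23)) ξ
    (cayley X) (isUnit_two_add_cayley_add_transpose hX)).const_mul (2 / ε)
  refine h.congr_deriv ?_
  rw [trace_mul_four_mul_inv_mul_mul_inv hX, trace_mul_eq_neg_half_trace_sub_transpose_mul hξ,
    cayley_hat3_skew_part, smul_mul_assoc, trace_smul, smul_eq_mul]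
  field_simp
  ring

/-- The discrete Legendre transformation of the consistent
discrete Lagrangian `ℓ_d^{(∞,ε)} = ε·ℓ∘Cay_ε⁻¹` of the Suslov problem: with
`W = Cay_ε(hat(u, v, 0))` and `J = (1/2)·trace(𝕀)·1 − 𝕀`, the matrix `2·1 + W + Wᵀ`
is invertible, and for every skew-symmetric `ξ`, the function
`s ↦ (2/ε)·trace(J·(2·1 − V(s) − V(s)ᵀ)·(2·1 + V(s) + V(s)ᵀ)⁻¹)` with
`V(s) = exp(s·ξ)·W` is differentiable at `s = 0` with derivative
`(1/2)·trace(hat(N1, N2, N3)·ξᵀ)`. -/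
theorem suslov_discrete_legendre_consistent
    (I11 I22 I33 I13 I23 : ℝ) (hI11 : 0 < I11) (hI22 : 0 < I22)
    (ε : ℝ) (hε : ε ≠ 0) (u v : ℝ) :
    IsUnit ((2 : Matrix (Fin 3) (Fin 3) ℝ)
        + Cay ε (hat3 u v 0) + (Cay ε (hat3 u v 0))ᵀ) ∧
      ∀ ξ : Matrix (Fin 3) (Fin 3) ℝ, ξᵀ = -ξ →
        HasDerivAt
          (fun s : ℝ =>
            (2 / ε) *
              (Jmat (inertia I11 I22 I33 I13 I23) *
                ((2 : Matrix (Fin 3) (Fin 3) ℝ)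
                    - NormedSpace.exp (s • ξ) * Cay ε (hat3 u v 0)
                    - (NormedSpace.exp (s • ξ) * Cay ε (hat3 u v 0))ᵀ) *
                ((2 : Matrix (Fin 3) (Fin 3) ℝ)
                    + NormedSpace.exp (s • ξ) * Cay ε (hat3 u v 0)
                    + (NormedSpace.exp (s • ξ) * Cay ε (hat3 u v 0))ᵀ)⁻¹).trace)
          ((1 / 2 : ℝ) *
            (hat3
                (I11 * u + (ε / 2) * v * (I13 * u + I23 * v)
                  + (ε ^ 2 / 4) * u * (I11 * u ^ 2 + I22 * v ^ 2))
                (I22 * v - (ε / 2) * u * (I13 * u + I23 * v)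
                  + (ε ^ 2 / 4) * v * (I11 * u ^ 2 + I22 * v ^ 2))
                (I13 * u + I23 * v + (ε / 2) * u * v * (I22 - I11)) * ξᵀ).trace)
          0 :=
  suslov_discrete_legendre_consistent_general I11 I22 I33 I13 I23 ε hε u v

end
end

section
/- Fix real parameters I11, I22, I13, I23 with I11 > 0, I22 > 0, I11 ≠ I22, I13 ≠ 0 and I23 ≠ 0. Then there exist homogeneous polynomials p2, p3, p4 in three variables X, Y, Z with real coefficients, of degrees 2, 3 and 4 respectively, such that for all ε ∈ ℝ and all (u, v) ∈ ℝ², writing D = 4 + ε²(u² + v²), X = 2·(2·I11·u + ε·v·(I13·u + I23·v))/D, Y = 2·(2·I22·v − ε·u·(I13·u + I23·v))/D, Z = 2·(2·(I13·u + I23·v) + ε·(I22 − I11)·u·v)/D, one has −4·(I11 − I22)·(I13·I22·X + I11·I23·Y − I11·I22·Z) + ε·p2(X, Y, Z) + ε²·p3(X, Y, Z) + ε³·p4(X, Y, Z) = 0. In particular the discrete momentum locus of the Moser–Veselov type discretisation of the Suslov problem is contained in the zero locus of a degree-four polynomial in (X, Y, Z). -/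
open MvPolynomial

/-- A scaled monomial `c • X^i Y^j Z^k` in three variables. -/
noncomputable def slm (r : ℝ) (i j k : ℕ) : MvPolynomial (Fin 3) ℝ :=
  MvPolynomial.C r * X 0 ^ i * X 1 ^ j * X 2 ^ k

lemma slm_hom (r : ℝ) (i j k n : ℕ) (h : i + j + k = n) :
    (slm r i j k).IsHomogeneous n := by
  subst h
  have h0 : (MvPolynomial.C (σ := Fin 3) r).IsHomogeneous 0 :=
    MvPolynomial.isHomogeneous_C _ _
  have hx : ((X (0 : Fin 3) : MvPolynomial (Fin 3) ℝ) ^ i).IsHomogeneous (1 * i) :=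
    (MvPolynomial.isHomogeneous_X ℝ 0).pow i
  have hy : ((X (1 : Fin 3) : MvPolynomial (Fin 3) ℝ) ^ j).IsHomogeneous (1 * j) :=
    (MvPolynomial.isHomogeneous_X ℝ 1).pow j
  have hz : ((X (2 : Fin 3) : MvPolynomial (Fin 3) ℝ) ^ k).IsHomogeneous (1 * k) :=
    (MvPolynomial.isHomogeneous_X ℝ 2).pow k
  have := ((h0.mul hx).mul hy).mul hz
  simpa [slm, one_mul] using this

lemma slm_eval (r : ℝ) (i j k : ℕ) (w : Fin 3 → ℝ) :
    MvPolynomial.eval w (slm r i j k) = r * w 0 ^ i * w 1 ^ j * w 2 ^ k := by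
  simp [slm]

noncomputable def P2 (a b c d : ℝ) : MvPolynomial (Fin 3) ℝ :=
    slm (((-2 : ℝ) * b^2 * c^2 + (2 : ℝ) * a * b * c^2) / (c * d)) 2 0 0 +
    slm (((4 : ℝ) * b^2 * c * d + (-8 : ℝ) * a * b * c * d + (4 : ℝ) * a^2 * c * d) / (c * d)) 1 1 0 +
    slm (((4 : ℝ) * b * c * d^2 + (2 : ℝ) * b * c^3 + (-2 : ℝ) * a * c * d^2 + (2 : ℝ) * a * b^2 * c + (-2 : ℝ) * a^2 * b * c) / (c * d)) 1 0 1 +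
    slm (((2 : ℝ) * a * b * d^2 + (-2 : ℝ) * a^2 * d^2) / (c * d)) 0 2 0 +
    slm (((-2 : ℝ) * b * c^2 * d + (2 : ℝ) * a * d^3 + (4 : ℝ) * a * c^2 * d + (-2 : ℝ) * a * b^2 * d + (2 : ℝ) * a^2 * b * d) / (c * d)) 0 1 1 +
    slm (((-2 : ℝ) * a * b * d^2 + (-2 : ℝ) * a * b * c^2) / (c * d)) 0 0 2

noncomputable def P3 (a b c d : ℝ) : MvPolynomial (Fin 3) ℝ :=
    slm (((1 : ℝ) * c^2 * d) / (c * d)) 3 0 0 +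
    slm (((2 : ℝ) * c * d^2 + (-1 : ℝ) * c^3 + (-2 : ℝ) * b^2 * c + (3 : ℝ) * a * b * c + (-1 : ℝ) * a^2 * c) / (c * d)) 2 1 0 +
    slm (((-4 : ℝ) * b * c * d + (1 : ℝ) * a * c * d) / (c * d)) 2 0 1 +
    slm (((1 : ℝ) * d^3 + (-2 : ℝ) * c^2 * d + (1 : ℝ) * b^2 * d + (-3 : ℝ) * a * b * d + (2 : ℝ) * a^2 * d) / (c * d)) 1 2 0 +
    slm (((3 : ℝ) * b * c^2 + (-3 : ℝ) * a * d^2 + (1 : ℝ) * a * b^2 + (-1 : ℝ) * a^2 * b) / (c * d)) 1 1 1 +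
    slm (((1 : ℝ) * d^3 + (1 : ℝ) * c^2 * d + (1 : ℝ) * b^2 * d + (1 : ℝ) * a * b * d) / (c * d)) 1 0 2 +
    slm (((-1 : ℝ) * c * d^2) / (c * d)) 0 3 0 +
    slm (((-1 : ℝ) * b * c * d + (4 : ℝ) * a * c * d) / (c * d)) 0 2 1 +
    slm (((-1 : ℝ) * c * d^2 + (-1 : ℝ) * c^3 + (-1 : ℝ) * a * b * c + (-1 : ℝ) * a^2 * c) / (c * d)) 0 1 2 +
    slm (((-1 : ℝ) * b * c * d + (1 : ℝ) * a * c * d) / (c * d)) 0 0 3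

noncomputable def P4 (a b c d : ℝ) : MvPolynomial (Fin 3) ℝ :=
    slm ((((-1 : ℝ)/2) * c^2) / (c * d)) 4 0 0 +
    slm (((-1 : ℝ) * c * d) / (c * d)) 3 1 0 +
    slm (((1 : ℝ) * b * c) / (c * d)) 3 0 1 +
    slm ((((-1 : ℝ)/2) * d^2 + ((-1 : ℝ)/2) * c^2 + ((-1 : ℝ)/2) * b^2 + (1 : ℝ) * a * b + ((-1 : ℝ)/2) * a^2) / (c * d)) 2 2 0 +
    slm (((1 : ℝ) * a * d) / (c * d)) 2 1 1 +
    slm ((((-1 : ℝ)/2) * d^2 + (-1 : ℝ) * c^2 + ((-1 : ℝ)/2) * b^2) / (c * d)) 2 0 2 +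
    slm (((-1 : ℝ) * c * d) / (c * d)) 1 3 0 +
    slm (((1 : ℝ) * b * c) / (c * d)) 1 2 1 +
    slm (((-1 : ℝ) * c * d) / (c * d)) 1 1 2 +
    slm (((1 : ℝ) * b * c) / (c * d)) 1 0 3 +
    slm ((((-1 : ℝ)/2) * d^2) / (c * d)) 0 4 0 +
    slm (((1 : ℝ) * a * d) / (c * d)) 0 3 1 +
    slm (((-1 : ℝ) * d^2 + ((-1 : ℝ)/2) * c^2 + ((-1 : ℝ)/2) * a^2) / (c * d)) 0 2 2 +
    slm (((1 : ℝ) * a * d) / (c * d)) 0 1 3 +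
    slm ((((-1 : ℝ)/2) * d^2 + ((-1 : ℝ)/2) * c^2) / (c * d)) 0 0 4


lemma P2_hom (a b c d : ℝ) : (P2 a b c d).IsHomogeneous 2 := by
  unfold P2
  repeat' apply MvPolynomial.IsHomogeneous.add
  all_goals exact slm_hom _ _ _ _ _ (by norm_num)

lemma P3_hom (a b c d : ℝ) : (P3 a b c d).IsHomogeneous 3 := by
  unfold P3
  repeat' apply MvPolynomial.IsHomogeneous.add
  all_goals exact slm_hom _ _ _ _ _ (by norm_num)

lemma P4_hom (a b c d : ℝ) : (P4 a b c d).IsHomogeneous 4 := by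
  unfold P4
  repeat' apply MvPolynomial.IsHomogeneous.add
  all_goals exact slm_hom _ _ _ _ _ (by norm_num)


lemma P2_eval (a b c d x1 x2 x3 Dv : ℝ) (hc : c ≠ 0) (hd : d ≠ 0) (hD : Dv ≠ 0) :
    MvPolynomial.eval ![x1 / Dv, x2 / Dv, x3 / Dv] (P2 a b c d) =
      (((-2 : ℝ) * b^2 * c^2 + (2 : ℝ) * a * b * c^2) * x1*x1 +
      ((4 : ℝ) * b^2 * c * d + (-8 : ℝ) * a * b * c * d + (4 : ℝ) * a^2 * c * d) * x1*x2 +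
      ((4 : ℝ) * b * c * d^2 + (2 : ℝ) * b * c^3 + (-2 : ℝ) * a * c * d^2 + (2 : ℝ) * a * b^2 * c + (-2 : ℝ) * a^2 * b * c) * x1*x3 +
      ((2 : ℝ) * a * b * d^2 + (-2 : ℝ) * a^2 * d^2) * x2*x2 +
      ((-2 : ℝ) * b * c^2 * d + (2 : ℝ) * a * d^3 + (4 : ℝ) * a * c^2 * d + (-2 : ℝ) * a * b^2 * d + (2 : ℝ) * a^2 * b * d) * x2*x3 +
      ((-2 : ℝ) * a * b * d^2 + (-2 : ℝ) * a * b * c^2) * x3*x3) / (c * d * Dv ^ 2) := by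
  simp only [P2, map_add, slm_eval, Matrix.cons_val_zero, Matrix.cons_val_one,
    Matrix.head_cons, Matrix.cons_val_two, Matrix.tail_cons]
  field_simp

set_option maxHeartbeats 2000000 in
lemma P3_eval (a b c d x1 x2 x3 Dv : ℝ) (hc : c ≠ 0) (hd : d ≠ 0) (hD : Dv ≠ 0) :
    MvPolynomial.eval ![x1 / Dv, x2 / Dv, x3 / Dv] (P3 a b c d) =
      (((1 : ℝ) * c^2 * d) * x1*x1*x1 +
      ((2 : ℝ) * c * d^2 + (-1 : ℝ) * c^3 + (-2 : ℝ) * b^2 * c + (3 : ℝ) * a * b * c + (-1 : ℝ) * a^2 * c) * x1*x1*x2 +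
      ((-4 : ℝ) * b * c * d + (1 : ℝ) * a * c * d) * x1*x1*x3 +
      ((1 : ℝ) * d^3 + (-2 : ℝ) * c^2 * d + (1 : ℝ) * b^2 * d + (-3 : ℝ) * a * b * d + (2 : ℝ) * a^2 * d) * x1*x2*x2 +
      ((3 : ℝ) * b * c^2 + (-3 : ℝ) * a * d^2 + (1 : ℝ) * a * b^2 + (-1 : ℝ) * a^2 * b) * x1*x2*x3 +
      ((1 : ℝ) * d^3 + (1 : ℝ) * c^2 * d + (1 : ℝ) * b^2 * d + (1 : ℝ) * a * b * d) * x1*x3*x3 +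
      ((-1 : ℝ) * c * d^2) * x2*x2*x2 +
      ((-1 : ℝ) * b * c * d + (4 : ℝ) * a * c * d) * x2*x2*x3 +
      ((-1 : ℝ) * c * d^2 + (-1 : ℝ) * c^3 + (-1 : ℝ) * a * b * c + (-1 : ℝ) * a^2 * c) * x2*x3*x3 +
      ((-1 : ℝ) * b * c * d + (1 : ℝ) * a * c * d) * x3*x3*x3) / (c * d * Dv ^ 3) := by
  simp only [P3, map_add, slm_eval, Matrix.cons_val_zero, Matrix.cons_val_one,
    Matrix.head_cons, Matrix.cons_val_two, Matrix.tail_cons]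
  field_simp

set_option maxHeartbeats 2000000 in
lemma P4_eval (a b c d x1 x2 x3 Dv : ℝ) (hc : c ≠ 0) (hd : d ≠ 0) (hD : Dv ≠ 0) :
    MvPolynomial.eval ![x1 / Dv, x2 / Dv, x3 / Dv] (P4 a b c d) =
      ((((-1 : ℝ)/2) * c^2) * x1*x1*x1*x1 +
      ((-1 : ℝ) * c * d) * x1*x1*x1*x2 +
      ((1 : ℝ) * b * c) * x1*x1*x1*x3 +
      (((-1 : ℝ)/2) * d^2 + ((-1 : ℝ)/2) * c^2 + ((-1 : ℝ)/2) * b^2 + (1 : ℝ) * a * b + ((-1 : ℝ)/2) * a^2) * x1*x1*x2*x2 +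
      ((1 : ℝ) * a * d) * x1*x1*x2*x3 +
      (((-1 : ℝ)/2) * d^2 + (-1 : ℝ) * c^2 + ((-1 : ℝ)/2) * b^2) * x1*x1*x3*x3 +
      ((-1 : ℝ) * c * d) * x1*x2*x2*x2 +
      ((1 : ℝ) * b * c) * x1*x2*x2*x3 +
      ((-1 : ℝ) * c * d) * x1*x2*x3*x3 +
      ((1 : ℝ) * b * c) * x1*x3*x3*x3 +
      (((-1 : ℝ)/2) * d^2) * x2*x2*x2*x2 +
      ((1 : ℝ) * a * d) * x2*x2*x2*x3 +
      ((-1 : ℝ) * d^2 + ((-1 : ℝ)/2) * c^2 + ((-1 : ℝ)/2) * a^2) * x2*x2*x3*x3 +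
      ((1 : ℝ) * a * d) * x2*x3*x3*x3 +
      (((-1 : ℝ)/2) * d^2 + ((-1 : ℝ)/2) * c^2) * x3*x3*x3*x3) / (c * d * Dv ^ 4) := by
  simp only [P4, map_add, slm_eval, Matrix.cons_val_zero, Matrix.cons_val_one,
    Matrix.head_cons, Matrix.cons_val_two, Matrix.tail_cons]
  field_simp

lemma L_eq (ab a b c d x1 x2 x3 Dv : ℝ) :
    ab * (c * b * (x1 / Dv) + a * d * (x2 / Dv) - a * b * (x3 / Dv)) =
      ab * (c * b * x1 + a * d * x2 - a * b * x3) / Dv := by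
  ring

lemma combine (P Q R S Dv c d e : ℝ) (hc : c ≠ 0) (hd : d ≠ 0) (hD : Dv ≠ 0)
    (h : P * (c * d * Dv ^ 3) + e * Q * Dv ^ 2 + e ^ 2 * R * Dv + e ^ 3 * S = 0) :
    P / Dv + e * (Q / (c * d * Dv ^ 2)) + e ^ 2 * (R / (c * d * Dv ^ 3))
      + e ^ 3 * (S / (c * d * Dv ^ 4)) = 0 := by
  have key : P / Dv + e * (Q / (c * d * Dv ^ 2)) + e ^ 2 * (R / (c * d * Dv ^ 3))
      + e ^ 3 * (S / (c * d * Dv ^ 4))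
      = (P * (c * d * Dv ^ 3) + e * Q * Dv ^ 2 + e ^ 2 * R * Dv + e ^ 3 * S)
        / (c * d * Dv ^ 4) := by
    field_simp
  rw [key, h, zero_div]

set_option maxHeartbeats 4000000 in
/-- The discrete momentum locus of the Moser–Veselov type discretisation
of the Suslov problem is contained in the zero locus of a degree-four polynomial: there
exist homogeneous polynomials `p2, p3, p4` of degrees `2, 3, 4` such that the displayed
identity holds along the parametrised momentum locus. -/
theorem suslov_momentum_locus_degree_four_moser_veselov
    (I11 I22 I13 I23 : ℝ) (hI11 : 0 < I11) (hI22 : 0 < I22)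
    (hI : I11 ≠ I22) (hI13 : I13 ≠ 0) (hI23 : I23 ≠ 0) :
    ∃ p2 p3 p4 : MvPolynomial (Fin 3) ℝ,
      p2.IsHomogeneous 2 ∧ p3.IsHomogeneous 3 ∧ p4.IsHomogeneous 4 ∧
      ∀ ε u v : ℝ,
        -4 * (I11 - I22) *
            (I13 * I22 *
                (2 * (2 * I11 * u + ε * v * (I13 * u + I23 * v)) /
                  (4 + ε ^ 2 * (u ^ 2 + v ^ 2)))
              + I11 * I23 *
                (2 * (2 * I22 * v - ε * u * (I13 * u + I23 * v)) /
                  (4 + ε ^ 2 * (u ^ 2 + v ^ 2)))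
              - I11 * I22 *
                (2 * (2 * (I13 * u + I23 * v) + ε * (I22 - I11) * u * v) /
                  (4 + ε ^ 2 * (u ^ 2 + v ^ 2))))
          + ε * MvPolynomial.eval
              ![2 * (2 * I11 * u + ε * v * (I13 * u + I23 * v)) /
                  (4 + ε ^ 2 * (u ^ 2 + v ^ 2)),
                2 * (2 * I22 * v - ε * u * (I13 * u + I23 * v)) /
                  (4 + ε ^ 2 * (u ^ 2 + v ^ 2)),
                2 * (2 * (I13 * u + I23 * v) + ε * (I22 - I11) * u * v) /
                  (4 + ε ^ 2 * (u ^ 2 + v ^ 2))] p2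
          + ε ^ 2 * MvPolynomial.eval
              ![2 * (2 * I11 * u + ε * v * (I13 * u + I23 * v)) /
                  (4 + ε ^ 2 * (u ^ 2 + v ^ 2)),
                2 * (2 * I22 * v - ε * u * (I13 * u + I23 * v)) /
                  (4 + ε ^ 2 * (u ^ 2 + v ^ 2)),
                2 * (2 * (I13 * u + I23 * v) + ε * (I22 - I11) * u * v) /
                  (4 + ε ^ 2 * (u ^ 2 + v ^ 2))] p3
          + ε ^ 3 * MvPolynomial.eval
              ![2 * (2 * I11 * u + ε * v * (I13 * u + I23 * v)) /
                  (4 + ε ^ 2 * (u ^ 2 + v ^ 2)),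
                2 * (2 * I22 * v - ε * u * (I13 * u + I23 * v)) /
                  (4 + ε ^ 2 * (u ^ 2 + v ^ 2)),
                2 * (2 * (I13 * u + I23 * v) + ε * (I22 - I11) * u * v) /
                  (4 + ε ^ 2 * (u ^ 2 + v ^ 2))] p4
          = 0 := by
  refine ⟨P2 I11 I22 I13 I23, P3 I11 I22 I13 I23, P4 I11 I22 I13 I23,
    P2_hom _ _ _ _, P3_hom _ _ _ _, P4_hom _ _ _ _, ?_⟩
  intro ε u v
  have hD : (4 + ε ^ 2 * (u ^ 2 + v ^ 2)) ≠ 0 := by positivity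
  rw [P2_eval _ _ _ _ _ _ _ _ hI13 hI23 hD, P3_eval _ _ _ _ _ _ _ _ hI13 hI23 hD,
    P4_eval _ _ _ _ _ _ _ _ hI13 hI23 hD, L_eq]
  refine combine _ _ _ _ _ _ _ _ hI13 hI23 hD ?_
  ring
end
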